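/- Let X be a topological space and let f : X → ℝ be a first Baire class function. Then for all a, b ∈ ℝ with a < b, the set f⁻¹((a, b)) is a countable union of functionally closed subsets of X. -/
import Mathlib


open Set Filter Topology TopologicalSpace

/-- A subset `A` of a topological space is functionally closed if it is the
zero set of a continuous real-valued function. -/
def FunctionallyClosed {X : Type*} [TopologicalSpace X] (A : Set X) : Prop :=
  ∃ g : X → ℝ, Continuous g ∧ A = g ⁻¹' {0}

/-- `A` is a countable union of functionally closed subsets. -/
def CountableUnionOfFunctionallyClosed {X : Type*} [TopologicalSpace X] (A : Set X) : Prop :=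
  ∃ F : ℕ → Set X, (∀ n, FunctionallyClosed (F n)) ∧ A = ⋃ n, F n

/-- `f : X → ℝ` is a first Baire class function: a pointwise limit of a
sequence of continuous functions. -/
def BaireOne {X : Type*} [TopologicalSpace X] (f : X → ℝ) : Prop :=
  ∃ g : ℕ → X → ℝ, (∀ n, Continuous (g n)) ∧
    ∀ x, Tendsto (fun n => g n x) atTop (𝓝 (f x))

lemma fc_preimage_Icc {X : Type*} [TopologicalSpace X] {g : X → ℝ} (hg : Continuous g)
    (c d : ℝ) : FunctionallyClosed (g ⁻¹' Icc c d) := by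
  refine ⟨fun x => max (max (c - g x) (g x - d)) 0, by continuity, ?_⟩
  ext x
  simp only [mem_preimage, mem_Icc, mem_singleton_iff]
  constructor
  · rintro ⟨h1, h2⟩
    rw [max_eq_right]
    exact max_le (by linarith) (by linarith)
  · intro h
    have := le_max_left (max (c - g x) (g x - d)) 0
    rw [h] at this
    constructor <;> nlinarith [le_max_left (c - g x) (g x - d), le_max_right (c - g x) (g x - d), max_le_iff.mp this]

lemma fc_iInter {X : Type*} [TopologicalSpace X] {Z : ℕ → Set X}
    (hZ : ∀ n, FunctionallyClosed (Z n)) : FunctionallyClosed (⋂ n, Z n) := by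
  choose g hgc hgz using hZ
  set h : ℕ → X → ℝ := fun n x => min |g n x| 1 with hh
  have hnn : ∀ n x, 0 ≤ h n x := fun n x => le_min (abs_nonneg _) zero_le_one
  have hterm_nn : ∀ (x : X) (n : ℕ), 0 ≤ (1/2 : ℝ)^n * h n x := fun x n =>
    mul_nonneg (by positivity) (hnn n x)
  have hbd : ∀ (n : ℕ) (x : X), ‖(1/2 : ℝ)^n * h n x‖ ≤ (1/2 : ℝ)^n := by
    intro n x
    rw [Real.norm_eq_abs, abs_of_nonneg (hterm_nn x n)]
    calc (1/2 : ℝ)^n * h n x ≤ (1/2 : ℝ)^n * 1 :=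
          mul_le_mul_of_nonneg_left (min_le_right _ _) (by positivity)
      _ = (1/2 : ℝ)^n := mul_one _
  have hsum : Summable (fun n : ℕ => (1/2 : ℝ)^n) := summable_geometric_of_lt_one (by norm_num) (by norm_num)
  have hsumx : ∀ x : X, Summable (fun n => (1/2 : ℝ)^n * h n x) := by
    intro x
    refine Summable.of_nonneg_of_le (hterm_nn x) (fun n => ?_) hsum
    have := hbd n x
    rwa [Real.norm_eq_abs, abs_of_nonneg (hterm_nn x n)] at this
  refine ⟨fun x => ∑' n, (1/2 : ℝ)^n * h n x, ?_, ?_⟩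
  · refine continuous_tsum (fun n => ?_) hsum hbd
    exact Continuous.mul continuous_const (Continuous.min (hgc n).abs continuous_const)
  · ext x
    simp only [mem_iInter, mem_preimage, mem_singleton_iff]
    constructor
    · intro hx
      have : (fun n => (1/2 : ℝ)^n * h n x) = fun _ => 0 := by
        funext n
        have : g n x = 0 := by have := hx n; rwa [hgz n, mem_preimage, mem_singleton_iff] at this
        simp [hh, this]
      rw [this, tsum_zero]
    · intro hx
      intro n
      have h1 : (1/2 : ℝ)^n * h n x ≤ 0 := by
        have := Summable.le_tsum (hsumx x) n (fun m _ => hterm_nn x m)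
        rw [hx] at this; exact this
      have h2 : h n x = 0 := by
        have := hterm_nn x n
        nlinarith [pow_pos (by norm_num : (0:ℝ) < 1/2) n]
      have h3 : |g n x| = 0 := by
        rcases min_eq_iff.mp h2 with h | h
        · exact h.1
        · linarith [h.1, abs_nonneg (g n x)]
      rw [hgz n, mem_preimage, mem_singleton_iff]
      exact abs_eq_zero.mp h3

theorem baire_one_preimage_Ioo
    {X : Type*} [TopologicalSpace X] (f : X → ℝ) (hf : BaireOne f)
    (a b : ℝ) (hab : a < b) :
    CountableUnionOfFunctionallyClosed (f ⁻¹' Ioo a b) := by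
  obtain ⟨g, hgc, hlim⟩ := hf
  set S : ℕ → ℕ → Set X := fun k N =>
    ⋂ n, g (N + n) ⁻¹' Icc (a + 1/(k+1)) (b - 1/(k+1)) with hS
  refine ⟨fun m => S m.unpair.1 m.unpair.2, fun m => fc_iInter (fun n => fc_preimage_Icc (hgc _) _ _), ?_⟩
  ext x
  simp only [mem_preimage, mem_Ioo, mem_iUnion, hS, mem_iInter, mem_Icc]
  constructor
  · rintro ⟨h1, h2⟩
    obtain ⟨k, hk⟩ := exists_nat_one_div_lt (lt_min_iff.mpr ⟨sub_pos.mpr h1, sub_pos.mpr h2⟩)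
    have hk1 : a + 1/(k+1 : ℝ) < f x := by
      have := lt_min_iff.mp hk; push_cast at this ⊢; linarith [this.1]
    have hk2 : f x < b - 1/(k+1 : ℝ) := by
      have := lt_min_iff.mp hk; push_cast at this ⊢; linarith [this.2]
    have hev : ∀ᶠ n in atTop, g n x ∈ Ioo (a + 1/(k+1 : ℝ)) (b - 1/(k+1 : ℝ)) :=
      (hlim x).eventually (Ioo_mem_nhds hk1 hk2)
    obtain ⟨N, hN⟩ := eventually_atTop.mp hev
    refine ⟨Nat.pair k N, fun n => ?_⟩
    rw [Nat.unpair_pair]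
    have := hN (N + n) (Nat.le_add_right N n)
    exact ⟨le_of_lt this.1, le_of_lt this.2⟩
  · rintro ⟨m, hm⟩
    set k := m.unpair.1; set N := m.unpair.2
    have hpos : (0:ℝ) < 1/(k+1) := by positivity
    have htend : Tendsto (fun n => g (N + n) x) atTop (𝓝 (f x)) :=
      (hlim x).comp (tendsto_atTop_atTop.mpr (fun c => ⟨c, fun n hn => le_trans hn (Nat.le_add_left n N)⟩))
    have hfx : f x ∈ Icc (a + 1/(k+1 : ℝ)) (b - 1/(k+1 : ℝ)) :=
      isClosed_Icc.mem_of_tendsto htend (Eventually.of_forall (fun n => hm n))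
    exact ⟨by linarith [hfx.1], by linarith [hfx.2]⟩
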